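/- Horizontal stability of the strict tangent space: let D be a special polyhedra system and J1 ⊆ J2 two singular strata of D. Then T(Δ_{J2}) ⊆ T(Δ_{J1}) ⊆ J1. -/

import Mathlib

open scoped Pointwise

namespace RedSing

/-! ### Vectors and polyhedra.
A vector "in `ℝ^J`" is a function `ℕ → ℝ` supported on the finite set `J`. -/

abbrev Vec : Type := ℕ → ℝ

/-- The cone `ℝ_{≥0}^J` of nonnegative vectors supported on `J`. -/
def suppCone (J : Finset ℕ) : Set Vec :=
  {σ | (∀ j, 0 ≤ σ j) ∧ ∀ j, j ∉ J → σ j = 0}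

/-- Positive convex hull `[[A]] = convexHull (A + ℝ_{≥0}^J)`. -/
noncomputable def posHull (J : Finset ℕ) (A : Set Vec) : Set Vec :=
  convexHull ℝ (A + suppCone J)

/-- The lattice points `(1/d)·ℤ_{≥0}^J`. -/
def latticePts (J : Finset ℕ) (d : ℕ) : Set Vec :=
  {σ | σ ∈ suppCone J ∧ ∀ j, ∃ m : ℕ, σ j = (m : ℝ) / (d : ℝ)}

/-- `Δ ⊆ ℝ_{≥0}^J` is a characteristic polyhedron with denominator `d`. -/
def IsCharPoly (J : Finset ℕ) (d : ℕ) (Δ : Set Vec) : Prop :=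
  ∃ A, A ⊆ latticePts J d ∧ Δ = posHull J A

/-! ### Support fabrics -/

/-- A support fabric: a nonempty finite index set `I` together with a
downward-closed family `H` of subsets of `I` (the strata). -/
structure Fabric where
  I : Finset ℕ
  I_nonempty : I.Nonempty
  H : Set (Finset ℕ)
  mem_sub : ∀ J ∈ H, J ⊆ I
  downward : ∀ J ∈ H, ∀ J' ⊆ J, J' ∈ H

/-- Dimension of a support fabric: the maximal cardinality of a stratum. -/
noncomputable def Fabric.dim (F : Fabric) : ℕ :=
  sSup {n | ∃ J ∈ F.H, J.card = n}

/-- The Zariski topology on finsets: the open sets are the downward-closed families;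
subsets such as the strata set `H` carry the subspace topology. -/
instance zariskiTopology : TopologicalSpace (Finset ℕ) where
  IsOpen U := ∀ J ∈ U, ∀ J' ⊆ J, J' ∈ U
  isOpen_univ := fun J _ J' _ => Set.mem_univ J'
  isOpen_inter := fun s t hs ht J hJ J' hJ' => ⟨hs J hJ.1 J' hJ', ht J hJ.2 J' hJ'⟩
  isOpen_sUnion := fun S hS J hJ J' hJ' => by
    obtain ⟨t, htS, hJt⟩ := hJ
    exact ⟨t, htS, hS t htS J hJt J' hJ'⟩

/-! ### Polyhedra systems -/

/-- A polyhedra system over a support fabric: a nonempty characteristic polyhedron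
with denominator `d` for each stratum, compatible with the projections
(restriction of functions). -/
structure PolySys where
  F : Fabric
  d : ℕ
  d_pos : 0 < d
  Δ : Finset ℕ → Set Vec
  char : ∀ J ∈ F.H, IsCharPoly J d (Δ J)
  nonempty : ∀ J ∈ F.H, (Δ J).Nonempty
  compat : ∀ J₁ ∈ F.H, ∀ J₂ ∈ F.H, J₁ ⊆ J₂ →
    Δ J₁ = (fun σ => fun j => if j ∈ J₁ then σ j else 0) '' Δ J₂

/-- Contact exponent `δ(Δ) = min {|σ| : σ ∈ Δ}` (with the convention `δ = -1`
for the empty index set). -/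
noncomputable def contactExp (J : Finset ℕ) (Δ : Set Vec) : ℝ :=
  if J = (∅ : Finset ℕ) then -1 else sInf ((fun σ => ∑ j ∈ J, σ j) '' Δ)

/-- Singular locus: strata with contact exponent at least 1. -/
def Sing (D : PolySys) : Set (Finset ℕ) :=
  {J | J ∈ D.F.H ∧ 1 ≤ contactExp J (D.Δ J)}

/-- `D` is special: `δ(D) = max {δ(Δ_J)} = 1`. -/
def IsSpecial (D : PolySys) : Prop :=
  (∀ J ∈ D.F.H, contactExp J (D.Δ J) ≤ 1) ∧ ∃ J ∈ D.F.H, contactExp J (D.Δ J) = 1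

/-! ### Blow-ups and transforms -/

/-- The strata of the blow-up centered in `J`, with new index `inf` (playing `∞`). -/
def blowupH (H : Set (Finset ℕ)) (J : Finset ℕ) (inf : ℕ) : Set (Finset ℕ) :=
  {K | K ∈ H ∧ ¬ J ⊆ K} ∪
    {J' | ∃ K, (K ∈ H ∧ J ⊆ K) ∧ ∃ A, A ⊂ J ∧ J' = (K \ J) ∪ A ∪ {inf}}

/-- The map `π_J^#` from the strata of the blow-up to the strata of `F`. -/
def blowdown (J : Finset ℕ) (inf : ℕ) (J' : Finset ℕ) : Finset ℕ :=
  if inf ∈ J' then (J'.erase inf) ∪ J else J'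

/-- The map `λ_{J'} : ℝ^K → ℝ^{J'}`. -/
noncomputable def lamMap (J J' : Finset ℕ) (inf : ℕ) (σ : Vec) : Vec :=
  fun j => if j = inf then ∑ i ∈ J, σ i else if j ∈ J' then σ j else 0

/-- The indicator vector `e_{J',∞}` of the new index. -/
def eVec (inf : ℕ) : Vec := fun j => if j = inf then 1 else 0

/-- The polyhedron `Δ⁰_{J'}` of the total transform at a stratum `J'` of the blow-up. -/
noncomputable def totalΔ (D : PolySys) (J : Finset ℕ) (inf : ℕ) (J' : Finset ℕ) : Set Vec :=
  if inf ∈ J' then posHull J' (lamMap J J' inf '' D.Δ (blowdown J inf J'))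
  else D.Δ J'

/-- The polyhedron `Δ'_{J'} = Δ⁰_{J'} - e_{J',∞}` of the characteristic transform
(`e_{J',∞} = 0` when `∞ ∉ J'`). -/
noncomputable def charΔ (D : PolySys) (J : Finset ℕ) (inf : ℕ) (J' : Finset ℕ) : Set Vec :=
  if inf ∈ J' then
    (fun σ => σ - eVec inf) '' posHull J' (lamMap J J' inf '' D.Δ (blowdown J inf J'))
  else D.Δ J'

/-- `D'` is the total transform `Λ⁰_J(D)` of `D` centered in the nonempty stratum `J`,
with new index `inf`. -/
def IsTotalTransformAt (D D' : PolySys) (J : Finset ℕ) (inf : ℕ) : Prop :=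
  J ∈ D.F.H ∧ J ≠ ∅ ∧ D'.d = D.d ∧ inf ∉ D.F.I ∧
  D'.F.I = insert inf D.F.I ∧ D'.F.H = blowupH D.F.H J inf ∧
  ∀ J' ∈ D'.F.H, D'.Δ J' = totalΔ D J inf J'

/-- `D'` is a total transform of `D` centered in `J`. -/
def IsTotalTransform (D D' : PolySys) (J : Finset ℕ) : Prop :=
  ∃ inf, IsTotalTransformAt D D' J inf

/-- `D'` is the characteristic transform `Λ_J(D)` of `D` centered in the singular
stratum `J`, with new index `inf`. -/
def IsCharTransformAt (D D' : PolySys) (J : Finset ℕ) (inf : ℕ) : Prop :=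
  J ∈ Sing D ∧ D'.d = D.d ∧ inf ∉ D.F.I ∧
  D'.F.I = insert inf D.F.I ∧ D'.F.H = blowupH D.F.H J inf ∧
  ∀ J' ∈ D'.F.H, D'.Δ J' = charΔ D J inf J'

/-- `D'` is a characteristic transform of `D` centered in `J`. -/
def IsCharTransform (D D' : PolySys) (J : Finset ℕ) : Prop :=
  ∃ inf, IsCharTransformAt D D' J inf

/-- A reduction of singularities of `D`: a finite sequence of characteristic
transforms, each centered in a singular stratum of the previous system, ending
in a system with empty singular locus. -/
def HasReduction (D : PolySys) : Prop :=
  ∃ (k : ℕ) (seq : ℕ → PolySys), seq 0 = D ∧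
    (∀ i, i < k → ∃ J, IsCharTransform (seq i) (seq (i + 1)) J) ∧
    Sing (seq k) = ∅

/-! ### Strict tangent space and maximal contact -/

/-- Hironaka's strict tangent space `T(Δ)` of a polyhedron `Δ ⊆ ℝ_{≥0}^J`. -/
def strictTangent (J : Finset ℕ) (Δ : Set Vec) : Set ℕ :=
  {j | ∃ σ ∈ Δ, (∑ i ∈ J, σ i) = 1 ∧ σ j ≠ 0}

/-- The stratum `T` has maximal contact with the (special) system `D`. -/
def HasMaximalContact (D : PolySys) (T : Finset ℕ) : Prop :=
  T ∈ D.F.H ∧ ∀ J ∈ Sing D, (↑T : Set ℕ) ⊆ strictTangent J (D.Δ J)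

/-! ### Hironaka's projection from a stratum `T` -/

/-- Hironaka's projection `∇_J^T(σ) = σ|_{J∖T} / (1 - Σ_{j∈T} σ(j))`. -/
noncomputable def hironakaProj (T J : Finset ℕ) (σ : Vec) : Vec :=
  fun j => if j ∈ J \ T then σ j / (1 - ∑ i ∈ T, σ i) else 0

/-- The polyhedron `Δ^T_{J*} = ∇_J^T(Δ_J ∩ M_J^T)` of Hironaka's projection,
where `J = J* ∪ T`. -/
noncomputable def projΔ (D : PolySys) (T J' : Finset ℕ) : Set Vec :=
  hironakaProj T (J' ∪ T) '' {σ | σ ∈ D.Δ (J' ∪ T) ∧ (∑ i ∈ T, σ i) < 1}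

/-- The strata `H^T = {J ∖ T : T ⊆ J ∈ H}` of the projected fabric `F^T`. -/
def projH (F : Fabric) (T : Finset ℕ) : Set (Finset ℕ) :=
  {J' | ∃ J, (J ∈ F.H ∧ T ⊆ J) ∧ J' = J \ T}

/-- The singular locus of Hironaka's projection `D^T`. -/
def projSing (D : PolySys) (T : Finset ℕ) : Set (Finset ℕ) :=
  {J' | J' ∈ projH D.F T ∧ (projΔ D T J').Nonempty ∧ 1 ≤ contactExp J' (projΔ D T J')}

/-- `E` is Hironaka's projection `D^T` of `D` from the stratum `T`
(a polyhedra system over `F^T` with denominator `d!·d`). -/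
def IsHironakaProjection (D E : PolySys) (T : Finset ℕ) : Prop :=
  E.F.I = D.F.I \ T ∧ E.F.H = projH D.F T ∧ E.d = Nat.factorial D.d * D.d ∧
  ∀ J' ∈ E.F.H, E.Δ J' = projΔ D T J'

/-! ### Reduction `Red_C` of a system to a closed set `C` of strata -/

/-- The fabric `Red_C(F)`, with strata `H_C = ⋃_{J ∈ C} P(J)`. -/
def Fabric.red (F : Fabric) (C : Set (Finset ℕ)) : Fabric where
  I := F.I
  I_nonempty := F.I_nonempty
  H := {J' | ∃ J, (J ∈ C ∧ J ∈ F.H) ∧ J' ⊆ J}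
  mem_sub := by
    rintro J' ⟨J, ⟨_, hJH⟩, hsub⟩
    exact hsub.trans (F.mem_sub J hJH)
  downward := by
    rintro J' ⟨J, hJ, hsub⟩ J'' hsub'
    exact ⟨J, hJ, hsub'.trans hsub⟩

/-- The reduction `Red_C(D)` of a polyhedra system to a closed set `C ⊆ H`. -/
noncomputable def PolySys.red (D : PolySys) (C : Set (Finset ℕ)) : PolySys where
  F := D.F.red C
  d := D.d
  d_pos := D.d_pos
  Δ := D.Δ
  char := by
    rintro J ⟨K, ⟨_, hK⟩, hsub⟩
    exact D.char J (D.F.downward K hK J hsub)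
  nonempty := by
    rintro J ⟨K, ⟨_, hK⟩, hsub⟩
    exact D.nonempty J (D.F.downward K hK J hsub)
  compat := by
    rintro J₁ ⟨K₁, ⟨_, hK₁⟩, h₁⟩ J₂ ⟨K₂, ⟨_, hK₂⟩, h₂⟩ h12
    exact D.compat J₁ (D.F.downward K₁ hK₁ J₁ h₁) J₂ (D.F.downward K₂ hK₂ J₂ h₂) h12

/-- A special polyhedra system is consistent if for each connected component `C`
of its singular locus there is a stratum having maximal contact with `Red_C(D)`
(non-singular systems are consistent by convention). -/
def IsConsistent (D : PolySys) : Prop :=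
  ∀ x ∈ Sing D, ∃ T, HasMaximalContact (D.red (connectedComponentIn (Sing D) x)) T

/-! ### Fitting and Spivakovsky's invariant -/

/-- The fitting vector `w_Δ(j) = min {σ(j) : σ ∈ Δ}`. -/
noncomputable def fitVec (Δ : Set Vec) : Vec := fun j => sInf ((fun σ => σ j) '' Δ)

/-- The fitting `Δ̃ = Δ - w_Δ`. -/
noncomputable def fitting (Δ : Set Vec) : Set Vec := (fun σ => σ - fitVec Δ) '' Δ

/-- Spivakovsky's invariant `Spi_D = max {δ(Δ̃_J) : J ∈ Sing(D)}`. -/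
noncomputable def spi (D : PolySys) : ℝ :=
  sSup {x | ∃ J ∈ Sing D, contactExp J (fitting (D.Δ J)) = x}

/-- `S(D) = {J ∈ Sing(D) : δ(Δ̃_J) = Spi_D}`. -/
def SSet (D : PolySys) : Set (Finset ℕ) :=
  {J | J ∈ Sing D ∧ contactExp J (fitting (D.Δ J)) = spi D}

/-! ### Moderated transforms, normal crossings, quasi-ordinary systems -/

/-- The polyhedron of the `d`-moderated transform `Θ^d_J(N) = N(Λ_J(N/d))`
at a stratum `J'` of the blow-up. -/
noncomputable def modΔ (N : PolySys) (d : ℕ) (J : Finset ℕ) (inf : ℕ) (J' : Finset ℕ) :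
    Set Vec :=
  if inf ∈ J' then
    (fun σ => σ - (d : ℝ) • eVec inf) ''
      posHull J' (lamMap J J' inf '' N.Δ (blowdown J inf J'))
  else N.Δ J'

/-- `N'` is the `d`-moderated transform `Θ^d_J(N)` of the Newton polyhedra system `N`
centered in a stratum `J` with `δ(N_J) ≥ d`, with new index `inf`. -/
def IsModTransformAt (N N' : PolySys) (d : ℕ) (J : Finset ℕ) (inf : ℕ) : Prop :=
  N.d = 1 ∧ N'.d = 1 ∧ J ∈ N.F.H ∧ (d : ℝ) ≤ contactExp J (N.Δ J) ∧ inf ∉ N.F.I ∧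
  N'.F.I = insert inf N.F.I ∧ N'.F.H = blowupH N.F.H J inf ∧
  ∀ J' ∈ N'.F.H, N'.Δ J' = modΔ N d J inf J'

/-- `N'` is a `d`-moderated transform of `N` centered in `J`. -/
def IsModTransform (N N' : PolySys) (d : ℕ) (J : Finset ℕ) : Prop :=
  ∃ inf, IsModTransformAt N N' d J inf

/-- A Newton polyhedra system has normal crossings if each polyhedron has a
single vertex. -/
def HasNormalCrossings (D : PolySys) : Prop :=
  ∀ J ∈ D.F.H, ∃ σ, D.Δ J = posHull J {σ}

/-- `D` is Hironaka quasi-ordinary: each polyhedron over a singular stratum has a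
single vertex. -/
def IsQuasiOrdinary (D : PolySys) : Prop :=
  ∀ J ∈ Sing D, ∃ σ, D.Δ J = posHull J {σ}

/-! ### Lexicographic order on sequences of naturals -/

/-- Strict lexicographic order on sequences `ℕ → ℕ`. -/
def LexLt (φ ψ : ℕ → ℕ) : Prop := ∃ n, φ n < ψ n ∧ ∀ m < n, φ m = ψ m

/-- A weakly decreasing sequence of naturals. -/
def WeaklyDecr (φ : ℕ → ℕ) : Prop := ∀ n, φ (n + 1) ≤ φ n

/-
For a singular stratum `J₁ ⊆ J₂`, restricting a point `σ ∈ Δ_{J₂}` with `|σ| = 1` to `J₁` gives a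
point of `Δ_{J₁}`, whose modulus is at least `δ(Δ_{J₁}) ≥ 1`. Since `σ ≥ 0`, the modulus can only
drop under restriction, so it stays equal to `1`; hence `σ` vanishes off `J₁`, and every coordinate
where `σ` is nonzero is already witnessed by the restriction.
-/

lemma suppCone_convex (J : Finset ℕ) : Convex ℝ (suppCone J) := by
  intro σ hσ τ hτ a b ha hb _
  refine ⟨fun j => ?_, fun j hj => ?_⟩
  · have := hσ.1 j
    have := hτ.1 j
    simp only [Pi.add_apply, Pi.smul_apply, smul_eq_mul]
    positivity
  · simp [hσ.2 j hj, hτ.2 j hj]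

lemma IsCharPoly.subset_suppCone {J : Finset ℕ} {d : ℕ} {Δ : Set Vec} (h : IsCharPoly J d Δ) :
    Δ ⊆ suppCone J := by
  obtain ⟨A, hA, rfl⟩ := h
  refine convexHull_min ?_ (suppCone_convex J)
  rintro _ ⟨a, ha, s, hs, rfl⟩
  obtain ⟨⟨ha_nonneg, ha_supp⟩, -⟩ := hA ha
  exact ⟨fun j => add_nonneg (ha_nonneg j) (hs.1 j),
    fun j hj => by simp [ha_supp j hj, hs.2 j hj]⟩

lemma contactExp_le_sum {J : Finset ℕ} {Δ : Set Vec} (hJ : J ≠ ∅) (hΔ : Δ ⊆ suppCone J)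
    {σ : Vec} (hσ : σ ∈ Δ) : contactExp J Δ ≤ ∑ j ∈ J, σ j := by
  rw [contactExp, if_neg hJ]
  refine csInf_le ⟨0, ?_⟩ ⟨σ, hσ, rfl⟩
  rintro _ ⟨τ, hτ, rfl⟩
  exact Finset.sum_nonneg fun j _ => (hΔ hτ).1 j

lemma ne_empty_of_mem_Sing {D : PolySys} {J : Finset ℕ} (hJ : J ∈ Sing D) : J ≠ ∅ := by
  rintro rfl
  have := hJ.2
  rw [contactExp, if_pos rfl] at this
  norm_num at this

lemma one_le_sum_of_mem_Sing {D : PolySys} {J : Finset ℕ} (hJ : J ∈ Sing D) {σ : Vec}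
    (hσ : σ ∈ D.Δ J) : 1 ≤ ∑ j ∈ J, σ j :=
  hJ.2.trans <| contactExp_le_sum (ne_empty_of_mem_Sing hJ) (D.char J hJ.1).subset_suppCone hσ

lemma strictTangent_subset {J : Finset ℕ} {Δ : Set Vec} (hΔ : Δ ⊆ suppCone J) :
    strictTangent J Δ ⊆ J := by
  rintro j ⟨σ, hσ, -, hj⟩
  by_contra hjJ
  exact hj ((hΔ hσ).2 j hjJ)

lemma mem_of_sum_le_sum_of_ne_zero {J₁ J₂ : Finset ℕ} (h₁₂ : J₁ ⊆ J₂) {σ : Vec}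
    (hσ : σ ∈ suppCone J₂) (hsum : ∑ i ∈ J₂, σ i ≤ ∑ i ∈ J₁, σ i) {j : ℕ} (hj : σ j ≠ 0) :
    j ∈ J₁ := by
  have hjJ₂ : j ∈ J₂ := by
    by_contra h
    exact hj (hσ.2 j h)
  by_contra hjJ₁
  have := Finset.sum_lt_sum_of_subset h₁₂ hjJ₂ hjJ₁ (lt_of_le_of_ne (hσ.1 j) hj.symm)
    fun i _ _ => hσ.1 i
  linarith

lemma strictTangent_subset_strictTangent {J₁ J₂ : Finset ℕ} (h₁₂ : J₁ ⊆ J₂) {Δ₁ Δ₂ : Set Vec}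
    (hΔ₂ : Δ₂ ⊆ suppCone J₂) (hrestrict : ∀ σ ∈ Δ₂, (fun j => if j ∈ J₁ then σ j else 0) ∈ Δ₁)
    (hΔ₁ : ∀ τ ∈ Δ₁, 1 ≤ ∑ j ∈ J₁, τ j) :
    strictTangent J₂ Δ₂ ⊆ strictTangent J₁ Δ₁ := by
  rintro j ⟨σ, hσ, hsum, hj⟩
  have hrestrict_sum : ∑ i ∈ J₁, (if i ∈ J₁ then σ i else 0) = ∑ i ∈ J₁, σ i :=
    Finset.sum_congr rfl fun i hi => if_pos hi
  have hsum₁ : ∑ i ∈ J₁, σ i = 1 := by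
    refine le_antisymm ?_ (hrestrict_sum ▸ hΔ₁ _ (hrestrict σ hσ))
    rw [← hsum]
    exact Finset.sum_le_sum_of_subset_of_nonneg h₁₂ fun i _ _ => (hΔ₂ hσ).1 i
  have hjJ₁ : j ∈ J₁ := mem_of_sum_le_sum_of_ne_zero h₁₂ (hΔ₂ hσ) (by rw [hsum, hsum₁]) hj
  exact ⟨_, hrestrict σ hσ, hrestrict_sum.trans hsum₁, by simpa [hjJ₁] using hj⟩

theorem horizontal_stability_general (D : PolySys) (J₁ J₂ : Finset ℕ)
    (h₁ : J₁ ∈ Sing D) (h₂ : J₂ ∈ Sing D) (h₁₂ : J₁ ⊆ J₂) :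
    strictTangent J₂ (D.Δ J₂) ⊆ strictTangent J₁ (D.Δ J₁) ∧
      strictTangent J₁ (D.Δ J₁) ⊆ (↑J₁ : Set ℕ) := by
  refine ⟨strictTangent_subset_strictTangent h₁₂ (D.char J₂ h₂.1).subset_suppCone
    (fun σ hσ => ?_) (fun τ hτ => one_le_sum_of_mem_Sing h₁ hτ),
    strictTangent_subset (D.char J₁ h₁.1).subset_suppCone⟩
  rw [D.compat J₁ h₁.1 J₂ h₂.1 h₁₂]
  exact ⟨σ, hσ, rfl⟩

/-- Horizontal stability of the strict tangent space:
`T(Δ_{J₂}) ⊆ T(Δ_{J₁}) ⊆ J₁` for singular strata `J₁ ⊆ J₂` of a special system. -/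
theorem horizontal_stability (D : PolySys) (hsp : IsSpecial D) (J₁ J₂ : Finset ℕ)
    (h₁ : J₁ ∈ Sing D) (h₂ : J₂ ∈ Sing D) (h₁₂ : J₁ ⊆ J₂) :
    strictTangent J₂ (D.Δ J₂) ⊆ strictTangent J₁ (D.Δ J₁) ∧
      strictTangent J₁ (D.Δ J₁) ⊆ (↑J₁ : Set ℕ) :=
  horizontal_stability_general D J₁ J₂ h₁ h₂ h₁₂

end RedSing
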